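/- arXiv:1405.7457 — 2 statements merged into one kernel-verified Lean document; each statement's English description precedes it below -/
import Mathlib

section
/- (Contrapositive form of Proposition 2, inward-moving case.) Let x ∈ M, let U be an open neighborhood of x, and let N₁, …, N_m ∈ ℝ³ be linearly independent vectors such that M ∩ U = (⋂_{i=1}^m {y ∈ ℝ³ : ⟨N_i, y − x⟩ ≤ 0}) ∩ U. Assume A and b are continuous on ℝ and differentiable at t' ∈ I, and set v = γ_x'(t'). If t₀ < t' ≤ t₁ and ⟨A(t')·N_i, v⟩ < 0 for every i = 1, …, m, then γ_x(t') lies in the interior of the swept volume V = ⋃_{t∈I} M(t); in particular γ_x(t') is not on the envelope E. -/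
/-!
Pull the point `p = γ_x(t')` back along the motion: `z(t) = A(t)ᵀ (p - b(t))` is the point of the
body that sits at `p` at time `t`, and `z(t') = x`. Since
`⟪N, z(t) - x⟫ = ⟪A(t) N, p - γ_x(t)⟫` and `p - γ_x(t) ≈ (t' - t) v` for `t < t'`, the
inward-moving condition puts `z(t)` strictly inside every face for `t` slightly smaller than `t'`,
hence in the interior of `M`. The rigid motion at time `t` is a homeomorphism, so `p` is an
interior point of `M(t) ⊆ V`.
-/

open RealInnerProductSpace Matrix

/-- The action of a matrix on a point of `ℝ³ = EuclideanSpace ℝ (Fin 3)`. -/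
noncomputable def act (A : Matrix (Fin 3) (Fin 3) ℝ) (x : EuclideanSpace ℝ (Fin 3)) :
    EuclideanSpace ℝ (Fin 3) := Matrix.toEuclideanLin A x

open Filter Set Topology

theorem eventually_inner_sub_neg_nhdsLT {E : Type*} [NormedAddCommGroup E]
    [InnerProductSpace ℝ E] {F γ : ℝ → E} {v : E} {t' : ℝ} (hF : ContinuousAt F t')
    (hγ : HasDerivAt γ v t') (hneg : ⟪F t', v⟫ < 0) :
    ∀ᶠ t in 𝓝[<] t', ⟪F t, γ t' - γ t⟫ < 0 := by
  have hslope : Tendsto (fun t => ⟪F t, slope γ t' t⟫) (𝓝[<] t') (𝓝 ⟪F t', v⟫) :=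
    (hF.tendsto.mono_left nhdsWithin_le_nhds).inner
      ((hasDerivAt_iff_tendsto_slope.1 hγ).mono_left (nhdsLT_le_nhdsNE t'))
  filter_upwards [hslope.eventually (eventually_lt_nhds hneg), self_mem_nhdsWithin]
    with t hneg_t (ht : t < t')
  have hsub : γ t' - γ t = (t' - t) • slope γ t' t := by
    rw [← neg_sub t t', neg_smul, sub_smul_slope, vsub_eq_sub, neg_sub]
  rw [hsub, inner_smul_right]
  exact mul_neg_of_pos_of_neg (sub_pos.2 ht) hneg_t

theorem inter_halfspaces_subset_interior {E ι : Type*} [NormedAddCommGroup E]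
    [InnerProductSpace ℝ E] [Finite ι] {M U : Set E} {N : ι → E} {x : E} (hU : IsOpen U)
    (hMU : M ∩ U = (⋂ i, {y | ⟪N i, y - x⟫ ≤ 0}) ∩ U) :
    (⋂ i, {y | ⟪N i, y - x⟫ < 0}) ∩ U ⊆ interior M := by
  refine interior_maximal (fun y hy => ?_) ?_
  · have hy' : y ∈ (⋂ i, {y | ⟪N i, y - x⟫ ≤ 0}) ∩ U :=
      ⟨mem_iInter.2 fun i => (show ⟪N i, y - x⟫ < 0 from mem_iInter.1 hy.1 i).le, hy.2⟩
    exact (hMU ▸ hy').1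
  · exact (isOpen_iInter_of_finite fun i =>
      isOpen_lt (continuous_const.inner (continuous_id.sub continuous_const))
        continuous_const).inter hU

section RigidMotion

variable {A : Matrix (Fin 3) (Fin 3) ℝ}

theorem Continuous.act {X : Type*} [TopologicalSpace X] {A : X → Matrix (Fin 3) (Fin 3) ℝ}
    {w : X → EuclideanSpace ℝ (Fin 3)} (hA : Continuous A) (hw : Continuous w) :
    Continuous fun t => act (A t) (w t) :=
  (PiLp.continuous_toLp 2 _).comp (hA.matrix_mulVec ((PiLp.continuous_ofLp 2 _).comp hw))

theorem act_sub (x y : EuclideanSpace ℝ (Fin 3)) : act A (x - y) = act A x - act A y :=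
  map_sub _ x y

theorem act_act_of_mul_eq_one {B : Matrix (Fin 3) (Fin 3) ℝ} (h : B * A = 1)
    (x : EuclideanSpace ℝ (Fin 3)) : act B (act A x) = x := by
  simp [act, Matrix.toLpLin_apply, Matrix.mulVec_mulVec, h]

theorem inner_act_left (u w : EuclideanSpace ℝ (Fin 3)) : ⟪act A u, w⟫ = ⟪u, act Aᵀ w⟫ := by
  rw [← A.conjTranspose_eq_transpose_of_trivial, act, act,
    Matrix.toEuclideanLin_conjTranspose_eq_adjoint, LinearMap.adjoint_inner_right]

theorem inner_act_transpose_sub_eq (hA : Aᵀ * A = 1) (b p x n : EuclideanSpace ℝ (Fin 3)) :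
    ⟪n, act Aᵀ (p - b) - x⟫ = ⟪act A n, p - (act A x + b)⟫ := by
  rw [inner_act_left, sub_add_eq_sub_sub_swap, act_sub (A := Aᵀ) (p - b),
    act_act_of_mul_eq_one hA]

theorem isOpenMap_act_add (hA : Aᵀ * A = 1) (b : EuclideanSpace ℝ (Fin 3)) :
    IsOpenMap fun y => act A y + b :=
  IsOpenMap.of_inverse (f' := fun y => act Aᵀ (y - b))
    (continuous_const.act (continuous_id.sub continuous_const))
    (fun y => by simp [act_act_of_mul_eq_one (mul_eq_one_comm.1 hA)])
    (fun y => by simp [act_act_of_mul_eq_one hA])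

end RigidMotion

theorem interior_of_sweep_of_inward_moving_general
    (A : ℝ → Matrix (Fin 3) (Fin 3) ℝ) (b : ℝ → EuclideanSpace ℝ (Fin 3))
    (hA : ∀ t, (A t)ᵀ * A t = 1)
    (hAcont : Continuous A) (hbcont : Continuous b)
    (M : Set (EuclideanSpace ℝ (Fin 3)))
    (t₀ t₁ : ℝ)
    (x : EuclideanSpace ℝ (Fin 3))
    (U : Set (EuclideanSpace ℝ (Fin 3))) (hU : IsOpen U) (hxU : x ∈ U)
    (m : ℕ) (N : Fin m → EuclideanSpace ℝ (Fin 3))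
    (hMU : M ∩ U = (⋂ i, {y : EuclideanSpace ℝ (Fin 3) | ⟪N i, y - x⟫ ≤ 0}) ∩ U)
    (t' : ℝ) (ht'₀ : t₀ < t') (ht'₁ : t' ≤ t₁)
    (v : EuclideanSpace ℝ (Fin 3))
    (hv : HasDerivAt (fun t => act (A t) x + b t) v t')
    (hin : ∀ i, ⟪act (A t') (N i), v⟫ < 0) :
    act (A t') x + b t' ∈
        interior (⋃ t ∈ Set.Icc t₀ t₁, (fun y => act (A t) y + b t) '' M) ∧
      act (A t') x + b t' ∉
        frontier (⋃ t ∈ Set.Icc t₀ t₁, (fun y => act (A t) y + b t) '' M) := by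
  set p := act (A t') x + b t'
  set z : ℝ → EuclideanSpace ℝ (Fin 3) := fun t => act (A t)ᵀ (p - b t)
  have hz_cont : Continuous z := hAcont.matrix_transpose.act (continuous_const.sub hbcont)
  have hz_x : z t' = x := by
    simp only [z, p, add_sub_cancel_right, act_act_of_mul_eq_one (hA t')]
  have hz_faces : ∀ i, ∀ᶠ t in 𝓝[<] t', ⟪N i, z t - x⟫ < 0 := fun i => by
    simpa only [z, inner_act_transpose_sub_eq (hA _)] using
      eventually_inner_sub_neg_nhdsLT (hAcont.act continuous_const).continuousAt hv (hin i)
  have hz_U : ∀ᶠ t in 𝓝[<] t', z t ∈ U :=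
    nhdsWithin_le_nhds (hz_cont.continuousAt.eventually_mem (hU.mem_nhds (hz_x ▸ hxU)))
  obtain ⟨t, hzt, hzU, ht⟩ :=
    ((eventually_all.2 hz_faces).and (hz_U.and (Ioo_mem_nhdsLT ht'₀))).exists
  have hz_int : z t ∈ interior M :=
    inter_halfspaces_subset_interior hU hMU ⟨mem_iInter.2 hzt, hzU⟩
  have hp : p = act (A t) (z t) + b t := by
    simp [z, act_act_of_mul_eq_one (mul_eq_one_comm.1 (hA t))]
  have hp_int : p ∈ interior (⋃ t ∈ Icc t₀ t₁, (fun y => act (A t) y + b t) '' M) :=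
    interior_mono (subset_biUnion_of_mem (u := fun t => (fun y => act (A t) y + b t) '' M)
        (show t ∈ Icc t₀ t₁ from ⟨ht.1.le, ht.2.le.trans ht'₁⟩))
      ((isOpenMap_act_add (hA t) (b t)).image_interior_subset M
        (hp ▸ mem_image_of_mem _ hz_int))
  exact ⟨hp_int, fun h => h.2 hp_int⟩

/-- Contrapositive form of Proposition 2, inward-moving case: if near `x ∈ M` the solid
is the intersection of `m` half-spaces with linearly independent outward normals `N i`,
`t₀ < t' ≤ t₁` and `⟪A(t')·N i, γ_x'(t')⟫ < 0` for every `i`, then `γ_x(t')` lies in the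
interior of the swept volume; in particular it is not on the envelope. -/
theorem interior_of_sweep_of_inward_moving
    (A : ℝ → Matrix (Fin 3) (Fin 3) ℝ) (b : ℝ → EuclideanSpace ℝ (Fin 3))
    (hA : ∀ t, (A t)ᵀ * A t = 1)
    (hAcont : Continuous A) (hbcont : Continuous b)
    (M : Set (EuclideanSpace ℝ (Fin 3)))
    (t₀ t₁ : ℝ) (ht : t₀ < t₁)
    (x : EuclideanSpace ℝ (Fin 3)) (hxM : x ∈ M)
    (U : Set (EuclideanSpace ℝ (Fin 3))) (hU : IsOpen U) (hxU : x ∈ U)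
    (m : ℕ) (N : Fin m → EuclideanSpace ℝ (Fin 3)) (hNli : LinearIndependent ℝ N)
    (hMU : M ∩ U = (⋂ i, {y : EuclideanSpace ℝ (Fin 3) | ⟪N i, y - x⟫ ≤ 0}) ∩ U)
    (t' : ℝ) (ht'₀ : t₀ < t') (ht'₁ : t' ≤ t₁)
    (hAdiff : ∀ i j, DifferentiableAt ℝ (fun t => A t i j) t')
    (hbdiff : DifferentiableAt ℝ b t')
    (v : EuclideanSpace ℝ (Fin 3))
    (hv : HasDerivAt (fun t => act (A t) x + b t) v t')
    (hin : ∀ i, ⟪act (A t') (N i), v⟫ < 0) :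
    act (A t') x + b t' ∈
        interior (⋃ t ∈ Set.Icc t₀ t₁, (fun y => act (A t) y + b t) '' M) ∧
      act (A t') x + b t' ∉
        frontier (⋃ t ∈ Set.Icc t₀ t₁, (fun y => act (A t) y + b t) '' M) :=
  interior_of_sweep_of_inward_moving_general A b hA hAcont hbcont M t₀ t₁ x U hU hxU m N hMU t' ht'₀
    ht'₁ v hv hin
end

section
/- (Proposition 3: no local self-intersection at a sharp convex edge point.) Let M ⊆ ℝ³, x ∈ M, U an open neighborhood of x, and N₁, N₂ ∈ ℝ³ be such that M ∩ U ⊆ {y : ⟨N₁, y − x⟩ ≤ 0} ∩ {y : ⟨N₂, y − x⟩ ≤ 0}. Let A : ℝ → Matrix (Fin 3) (Fin 3) ℝ and b : ℝ → ℝ³ be continuous, differentiable at t', with A(t)ᵀ * A(t) = 1 for all t. Set v = γ_x'(t') and y = γ_x(t'), and assume ⟨A(t')·N₁, v⟩ > 0 and ⟨A(t')·N₂, v⟩ < 0. Then there exists δ > 0 such that for all t with 0 < |t − t'| < δ, the inverse-trajectory point γ̄_y(t) = A(t)ᵀ·(y − b(t)) does not belong to M; in particular the contact set is free of local self-intersection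 at y. -/
open RealInnerProductSpace Matrix

private lemma act_act (A B : Matrix (Fin 3) (Fin 3) ℝ) (x : EuclideanSpace ℝ (Fin 3)) :
    act A (act B x) = act (A * B) x := by
  simp [act, Matrix.toEuclideanLin_apply, Matrix.mulVec_mulVec]

private lemma act_one (x : EuclideanSpace ℝ (Fin 3)) : act 1 x = x := by
  simp [act, Matrix.toEuclideanLin_apply]

private lemma act_adj (A : Matrix (Fin 3) (Fin 3) ℝ) (u w : EuclideanSpace ℝ (Fin 3)) :
    ⟪u, act Aᵀ w⟫ = ⟪act A u, w⟫ := by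
  rw [act, act, ← Matrix.conjTranspose_eq_transpose_of_trivial,
    Matrix.toEuclideanLin_conjTranspose_eq_adjoint, LinearMap.adjoint_inner_right]

private lemma act_diff (A : ℝ → Matrix (Fin 3) (Fin 3) ℝ) (t' : ℝ)
    (hAdiff : ∀ i j, DifferentiableAt ℝ (fun t => A t i j) t')
    (w : EuclideanSpace ℝ (Fin 3)) :
    DifferentiableAt ℝ (fun t => act (A t) w) t' := by
  have : (fun t => act (A t) w) =
      fun t => (EuclideanSpace.equiv (Fin 3) ℝ).symm ((A t) *ᵥ (WithLp.equiv 2 _ w)) := by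
    funext t; simp [act, Matrix.toEuclideanLin_apply]
  rw [this]
  apply DifferentiableAt.comp
  · exact ((EuclideanSpace.equiv (Fin 3) ℝ).symm : (Fin 3 → ℝ) ≃L[ℝ] _).differentiableAt
  · rw [differentiableAt_pi]
    intro i
    simp only [Matrix.mulVec, dotProduct]
    exact DifferentiableAt.fun_sum fun j _ => (hAdiff i j).mul_const _

private lemma act_cont (A : ℝ → Matrix (Fin 3) (Fin 3) ℝ) (b : ℝ → EuclideanSpace ℝ (Fin 3))
    (hAcont : Continuous A) (hbcont : Continuous b) (y : EuclideanSpace ℝ (Fin 3)) :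
    Continuous (fun t => act (A t)ᵀ (y - b t)) := by
  have : (fun t => act (A t)ᵀ (y - b t)) =
      fun t => (EuclideanSpace.equiv (Fin 3) ℝ).symm ((A t)ᵀ *ᵥ (WithLp.equiv 2 _ (y - b t))) := by
    funext t; simp [act, Matrix.toEuclideanLin_apply]
  rw [this]
  apply ((EuclideanSpace.equiv (Fin 3) ℝ).symm : (Fin 3 → ℝ) ≃L[ℝ] _).continuous.comp
  apply continuous_pi
  intro i
  simp only [Matrix.mulVec, dotProduct, Matrix.transpose_apply]
  apply continuous_finset_sum
  intro j _
  exact (((continuous_apply i).comp ((continuous_apply j).comp hAcont))).mul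
    ((EuclideanSpace.proj j : EuclideanSpace ℝ (Fin 3) →L[ℝ] ℝ).continuous.comp
      (continuous_const.sub hbcont))

/-- Proposition 3: no local self-intersection at a sharp convex edge point. If near
`x ∈ M` the solid lies in the wedge `{y : ⟪N₁, y - x⟫ ≤ 0} ∩ {y : ⟪N₂, y - x⟫ ≤ 0}`,
`y = γ_x(t')`, `v = γ_x'(t')`, and `⟪A(t')·N₁, v⟫ > 0 > ⟪A(t')·N₂, v⟫` (so that `y` lies
in the interior of the face of the contact set generated by the edge), then for all `t`
close enough to (but different from) `t'` the inverse-trajectory point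
`γ̄_y(t) = A(t)ᵀ·(y - b(t))` does not belong to `M`; in particular the contact set is
free of local self-intersection at `y`. -/
theorem no_local_self_intersection_at_sharp_edge
    (M : Set (EuclideanSpace ℝ (Fin 3)))
    (x : EuclideanSpace ℝ (Fin 3)) (hxM : x ∈ M)
    (U : Set (EuclideanSpace ℝ (Fin 3))) (hU : IsOpen U) (hxU : x ∈ U)
    (N₁ N₂ : EuclideanSpace ℝ (Fin 3))
    (hMU : M ∩ U ⊆ {y : EuclideanSpace ℝ (Fin 3) | ⟪N₁, y - x⟫ ≤ 0} ∩
                   {y : EuclideanSpace ℝ (Fin 3) | ⟪N₂, y - x⟫ ≤ 0})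
    (A : ℝ → Matrix (Fin 3) (Fin 3) ℝ) (b : ℝ → EuclideanSpace ℝ (Fin 3))
    (hAcont : Continuous A) (hbcont : Continuous b)
    (horth : ∀ t, (A t)ᵀ * A t = 1)
    (t' : ℝ)
    (hAdiff : ∀ i j, DifferentiableAt ℝ (fun t => A t i j) t')
    (hbdiff : DifferentiableAt ℝ b t')
    (v : EuclideanSpace ℝ (Fin 3))
    (hv : HasDerivAt (fun t => act (A t) x + b t) v t')
    (y : EuclideanSpace ℝ (Fin 3)) (hy : y = act (A t') x + b t')
    (h₁ : 0 < ⟪act (A t') N₁, v⟫) (h₂ : ⟪act (A t') N₂, v⟫ < 0) :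
    ∃ δ > 0, ∀ t : ℝ, 0 < |t - t'| → |t - t'| < δ →
      act (A t)ᵀ (y - b t) ∉ M := by
  classical
  set f : ℝ → EuclideanSpace ℝ (Fin 3) := fun t => act (A t)ᵀ (y - b t) with hf
  have hAAw : ∀ t (w : EuclideanSpace ℝ (Fin 3)), act (A t)ᵀ (act (A t) w) = w := by
    intro t w; rw [act_act, horth, act_one]
  have hft' : f t' = x := by
    have : y - b t' = act (A t') x := by rw [hy]; abel
    simp only [hf, this, hAAw]
  -- the functions φ_N
  have key : ∀ N : EuclideanSpace ℝ (Fin 3),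
      HasDerivAt (fun t => ⟪act (A t) N, y - (act (A t) x + b t)⟫)
        (-⟪act (A t') N, v⟫) t' := by
    intro N
    have h1 := (act_diff A t' hAdiff N).hasDerivAt
    have h2 : HasDerivAt (fun t => y - (act (A t) x + b t)) (0 - v) t' :=
      (hasDerivAt_const t' y).sub hv
    have h3 := HasDerivAt.inner ℝ h1 h2
    have hz : y - (act (A t') x + b t') = 0 := by rw [hy]; abel
    rw [hz] at h3
    simpa using h3
  -- identity with the half-space functionals
  have hid : ∀ (N : EuclideanSpace ℝ (Fin 3)) (t : ℝ),
      ⟪act (A t) N, y - (act (A t) x + b t)⟫ = ⟪N, f t - x⟫ := by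
    intro N t
    have hsplit : y - (act (A t) x + b t) = (y - b t) - act (A t) x := by abel
    rw [hsplit, inner_sub_right, ← act_adj, ← act_adj, hAAw, ← inner_sub_right]
  have hφ0 : ∀ N : EuclideanSpace ℝ (Fin 3),
      ⟪act (A t') N, y - (act (A t') x + b t')⟫ = 0 := by
    intro N
    have hz : y - (act (A t') x + b t') = 0 := by rw [hy]; abel
    rw [hz, inner_zero_right]
  -- eventual facts
  have hfc : Continuous f := act_cont A b hAcont hbcont y
  have hUev : ∀ᶠ t in nhdsWithin t' {t'}ᶜ, f t ∈ U := by
    apply Filter.Eventually.filter_mono nhdsWithin_le_nhds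
    exact hfc.continuousAt.eventually_mem (hU.mem_nhds (hft' ▸ hxU))
  have hs1 : ∀ᶠ t in nhdsWithin t' {t'}ᶜ,
      slope (fun t => ⟪act (A t) N₁, y - (act (A t) x + b t)⟫) t' t < 0 := by
    have := hasDerivAt_iff_tendsto_slope.mp (key N₁)
    exact this.eventually (Iio_mem_nhds (by linarith))
  have hs2 : ∀ᶠ t in nhdsWithin t' {t'}ᶜ,
      0 < slope (fun t => ⟪act (A t) N₂, y - (act (A t) x + b t)⟫) t' t := by
    have := hasDerivAt_iff_tendsto_slope.mp (key N₂)
    exact this.eventually (Ioi_mem_nhds (by linarith))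
  have hall := (hUev.and hs1).and hs2
  rw [eventually_nhdsWithin_iff, Metric.eventually_nhds_iff] at hall
  obtain ⟨δ, hδ, hδall⟩ := hall
  refine ⟨δ, hδ, fun t ht0 htδ hmem => ?_⟩
  have htne : t ≠ t' := by
    intro h; rw [h] at ht0; simp at ht0
  have hdist : dist t t' < δ := by rwa [Real.dist_eq]
  obtain ⟨⟨hfU, hsl1⟩, hsl2⟩ := hδall hdist (by simpa using htne)
  have hMUt := hMU ⟨hmem, hfU⟩
  have hle1 : ⟪N₁, f t - x⟫ ≤ 0 := hMUt.1
  have hle2 : ⟪N₂, f t - x⟫ ≤ 0 := hMUt.2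
  -- rewrite slopes
  have hsub : t - t' ≠ 0 := sub_ne_zero.mpr htne
  have hval : ∀ N : EuclideanSpace ℝ (Fin 3),
      ⟪N, f t - x⟫ =
        slope (fun t => ⟪act (A t) N, y - (act (A t) x + b t)⟫) t' t * (t - t') := by
    intro N
    have h := slope_def_field (fun s => ⟪act (A s) N, y - (act (A s) x + b s)⟫) t' t
    rw [← hid N t, h, hφ0 N, sub_zero, div_mul_cancel₀ _ hsub]
  rcases lt_or_gt_of_ne htne with hlt | hgt
  · -- t < t' : use N₁
    have : 0 < ⟪N₁, f t - x⟫ := by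
      rw [hval N₁]
      exact mul_pos_of_neg_of_neg hsl1 (by linarith)
    linarith
  · -- t > t' : use N₂
    have : 0 < ⟪N₂, f t - x⟫ := by
      rw [hval N₂]
      exact mul_pos hsl2 (by linarith)
    linarith
end
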